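/- Let 𝔲 := {X ∈ Mat₂(ℍ) : Xᴴ η + η X = 0 and XΦ = ΦX}, where η = diag(-1,1). Then the six matrices (i/2)·Φ, (j/2)·Φ, (k/2)·Φ, (i/2)·𝟙₂, (j/2)·𝟙₂, (k/2)·𝟙₂ are linearly independent over ℝ and their real span equals 𝔲; in particular dim_ℝ 𝔲 = 6. -/

import Mathlib

/- Statement 8: a basis for the Lie algebra 𝔲 = {X : Xᴴη + ηX = 0, XΦ = ΦX}. -/

open Quaternion Matrix

noncomputable section

/-- The quaternions over ℝ. -/
abbrev Quat := Quaternion ℝ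

/-- The imaginary units of the quaternions. -/
def qi : Quat := ⟨0, 1, 0, 0⟩
def qj : Quat := ⟨0, 0, 1, 0⟩
def qk : Quat := ⟨0, 0, 0, 1⟩

/-- The matrix η = diag(-1,1). -/
def eta2 : Matrix (Fin 2) (Fin 2) Quat := Matrix.diagonal ![-1, 1]

/-- The matrix Φ = [[0,-1],[1,0]]. -/
def Phi : Matrix (Fin 2) (Fin 2) Quat := !![0, -1; 1, 0]

/-- The Lie algebra 𝔲 ⊂ Mat₂(ℍ), as a set. -/
def uSet : Set (Matrix (Fin 2) (Fin 2) Quat) :=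
  {X | Xᴴ * eta2 + eta2 * X = 0 ∧ X * Phi = Phi * X}

/-- The six matrices i/2·Φ, j/2·Φ, k/2·Φ, i/2·𝟙, j/2·𝟙, k/2·𝟙. -/
def uBasis : Fin 6 → Matrix (Fin 2) (Fin 2) Quat :=
  ![((1/2 : ℝ) • qi) • Phi, ((1/2 : ℝ) • qj) • Phi, ((1/2 : ℝ) • qk) • Phi,
    ((1/2 : ℝ) • qi) • (1 : Matrix (Fin 2) (Fin 2) Quat),
    ((1/2 : ℝ) • qj) • (1 : Matrix (Fin 2) (Fin 2) Quat),
    ((1/2 : ℝ) • qk) • (1 : Matrix (Fin 2) (Fin 2) Quat)]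

/- Write X = !![a, b; c, d]. Commuting with Φ forces d = a and b = -c, and then
Xᴴη + ηX = 0 says exactly that a and c are purely imaginary. Hence 𝔲 consists of the
matrices p • 1 + q • Φ with p, q purely imaginary, and the real combination
∑ cᵢ • uBasis i is such a matrix whose p and q have imaginary parts (c₃, c₄, c₅)/2 and
(c₀, c₁, c₂)/2; this gives spanning and independence at once. -/

@[simps]
def imQuat (x y z : ℝ) : Quat := ⟨0, x, y, z⟩

lemma imQuat_imI_imJ_imK {q : Quat} (hq : q.re = 0) : imQuat q.imI q.imJ q.imK = q := by
  ext <;> simp [hq]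

lemma imQuat_eq_zero_iff {x y z : ℝ} : imQuat x y z = 0 ↔ x = 0 ∧ y = 0 ∧ z = 0 := by
  simp [Quaternion.ext_iff]

lemma conjTranspose_fin_two {α : Type*} [Star α] (a b c d : α) :
    (!![a, b; c, d])ᴴ = !![star a, star c; star b, star d] := by
  ext i j
  fin_cases i <;> fin_cases j <;> rfl

lemma conjTranspose_mul_eta2_add_eta2_mul_eq_zero_iff (a b c d : Quat) :
    !![a, b; c, d]ᴴ * eta2 + eta2 * !![a, b; c, d] = 0 ↔
      a.re = 0 ∧ b = star c ∧ d.re = 0 := by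
  simp only [eta2, Matrix.diagonal_vec2, conjTranspose_fin_two]
  simp [← Matrix.ext_iff, Fin.forall_fin_two, add_eq_zero_iff_eq_neg, neg_eq_iff_eq_neg]
  grind [star_star]

lemma mul_Phi_eq_Phi_mul_iff (a b c d : Quat) :
    !![a, b; c, d] * Phi = Phi * !![a, b; c, d] ↔ d = a ∧ b = -c := by
  simp [Phi]
  grind

lemma smul_one_add_smul_Phi (p q : Quat) :
    p • (1 : Matrix (Fin 2) (Fin 2) Quat) + q • Phi = !![p, -q; q, p] := by
  ext i j : 1
  fin_cases i <;> fin_cases j <;> simp [Phi]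

lemma smul_one_add_smul_Phi_eq_zero_iff {p q : Quat} :
    p • (1 : Matrix (Fin 2) (Fin 2) Quat) + q • Phi = 0 ↔ p = 0 ∧ q = 0 := by
  simp [smul_one_add_smul_Phi, ← Matrix.ext_iff, Fin.forall_fin_two]
  tauto

lemma mem_uSet_iff {X : Matrix (Fin 2) (Fin 2) Quat} :
    X ∈ uSet ↔ ∃ p q : Quat, p.re = 0 ∧ q.re = 0 ∧ p • 1 + q • Phi = X := by
  simp only [smul_one_add_smul_Phi]
  constructor
  · rintro ⟨hη, hΦ⟩
    rw [Matrix.eta_fin_two X] at hη hΦ ⊢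
    obtain ⟨ha, hbc, -⟩ := (conjTranspose_mul_eta2_add_eta2_mul_eq_zero_iff ..).1 hη
    obtain ⟨hda, hb⟩ := (mul_Phi_eq_Phi_mul_iff ..).1 hΦ
    refine ⟨X 0 0, X 1 0, ha, ?_, by rw [hda, hb]⟩
    rw [← Quaternion.star_eq_neg, ← hbc, hb]
  · rintro ⟨p, q, hp, hq, rfl⟩
    refine ⟨(conjTranspose_mul_eta2_add_eta2_mul_eq_zero_iff ..).2 ⟨hp, ?_, hp⟩,
      (mul_Phi_eq_Phi_mul_iff ..).2 ⟨rfl, rfl⟩⟩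
    rw [Quaternion.star_eq_neg.2 hq]

lemma sum_smul_uBasis (c : Fin 6 → ℝ) :
    ∑ i, c i • uBasis i =
      imQuat (c 3 / 2) (c 4 / 2) (c 5 / 2) • (1 : Matrix (Fin 2) (Fin 2) Quat) +
        imQuat (c 0 / 2) (c 1 / 2) (c 2 / 2) • Phi := by
  have hi : qi = imQuat 1 0 0 := rfl
  have hj : qj = imQuat 0 1 0 := rfl
  have hk : qk = imQuat 0 0 1 := rfl
  rw [smul_one_add_smul_Phi]
  ext i j : 1
  fin_cases i <;> fin_cases j <;> ext <;> simp [Fin.sum_univ_six, uBasis, Phi, hi, hj, hk] <;> ring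

lemma linearIndependent_uBasis : LinearIndependent ℝ uBasis := by
  rw [Fintype.linearIndependent_iff]
  intro c hc
  rw [sum_smul_uBasis, smul_one_add_smul_Phi_eq_zero_iff, imQuat_eq_zero_iff,
    imQuat_eq_zero_iff] at hc
  simp only [div_eq_zero_iff, two_ne_zero, or_false] at hc
  obtain ⟨⟨h3, h4, h5⟩, h0, h1, h2⟩ := hc
  intro i
  fin_cases i <;> assumption

lemma span_uBasis_eq_uSet :
    (Submodule.span ℝ (Set.range uBasis) : Set (Matrix (Fin 2) (Fin 2) Quat)) = uSet := by
  ext X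
  rw [SetLike.mem_coe, Submodule.mem_span_range_iff_exists_fun, mem_uSet_iff]
  simp_rw [sum_smul_uBasis]
  constructor
  · rintro ⟨c, rfl⟩
    exact ⟨_, _, rfl, rfl, rfl⟩
  · rintro ⟨p, q, hp, hq, rfl⟩
    refine ⟨![2 * q.imI, 2 * q.imJ, 2 * q.imK, 2 * p.imI, 2 * p.imJ, 2 * p.imK], ?_⟩
    simp [imQuat_imI_imJ_imK hp, imQuat_imI_imJ_imK hq]

theorem uBasis_is_basis_of_u :
    LinearIndependent ℝ uBasis ∧
    (Submodule.span ℝ (Set.range uBasis) : Set (Matrix (Fin 2) (Fin 2) Quat)) = uSet ∧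
    Module.finrank ℝ (Submodule.span ℝ (Set.range uBasis)) = 6 :=
  ⟨linearIndependent_uBasis, span_uBasis_eq_uSet,
    (finrank_span_eq_card linearIndependent_uBasis).trans (Fintype.card_fin 6)⟩
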